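/- arXiv:1001.3238 — 4 statements merged into one kernel-verified Lean document; each statement's English description precedes it below -/
import Mathlib

section
/- Let p, q be relatively prime positive integers and T an order ideal in ℕ² contained in the region p·x + q·y < (p-1)(q-1). Let λ and μ be the associated partition and its dual (λ_j = 1 + max{i : (i,j) ∈ T} or 0; μ_i = 1 + max{j : (i,j) ∈ T} or 0). Define A_T(t) = Σ_{a=0}^{p-1} t^{a·q - p·λ_{p-1-a}} and B_T(t) = Σ_{a=0}^{q-1} t^{a·p - q·μ_{q-1-a}}. Then A_T(t)·ξ_q(t) = B_T(t)·ξ_p(t), where ξ_d(t) = 1 + t + ... + t^{d-1}. -/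
open Polynomial

noncomputable def xi (d : ℕ) : Polynomial ℤ := ∑ k ∈ Finset.range d, X ^ k

def IsOrderIdeal (T : Finset (ℕ × ℕ)) : Prop :=
  ∀ a ∈ T, ∀ b : ℕ × ℕ, b.1 ≤ a.1 → b.2 ≤ a.2 → b ∈ T

/-- λ_j = 1 + max{i : (i,j) ∈ T}, or 0 if no such i. -/
def lamb (T : Finset (ℕ × ℕ)) (j : ℕ) : ℕ :=
  (T.filter fun z => z.2 = j).sup fun z => z.1 + 1

/-- μ_i = 1 + max{j : (i,j) ∈ T}, or 0 if no such j (the dual partition). -/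
def mub (T : Finset (ℕ × ℕ)) (i : ℕ) : ℕ :=
  (T.filter fun z => z.1 = i).sup fun z => z.2 + 1

/-- A_T(t) = Σ_{a=0}^{p-1} t^{aq - p λ_{p-1-a}} -/
noncomputable def AT (p q : ℕ) (T : Finset (ℕ × ℕ)) : Polynomial ℤ :=
  ∑ a ∈ Finset.range p, X ^ (a * q - p * lamb T (p - 1 - a))

/-- B_T(t) = Σ_{a=0}^{q-1} t^{ap - q μ_{q-1-a}} -/
noncomputable def BT (p q : ℕ) (T : Finset (ℕ × ℕ)) : Polynomial ℤ :=
  ∑ a ∈ Finset.range q, X ^ (a * p - q * mub T (q - 1 - a))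

/-!
Write `e(x, y) = pq - p(x+1) - q(y+1)`. Removing the cells of row `j` one at a time telescopes
the `a = p-1-j` term of `A_∅ = Σ_{a<p} t^{aq}` down to that of `A_T`, so
`A_T = A_∅ - (t^p - 1) Σ_{z ∈ T} t^{e(z)}` and, by the symmetry `e(x, y) ↔ e(y, x)`,
`B_T = B_∅ - (t^q - 1) Σ_{z ∈ T} t^{e(z)}`. After multiplying by `t - 1` both sides of the
identity become `t^{pq} - 1 - (t^p - 1)(t^q - 1) Σ_{z ∈ T} t^{e(z)}`.
-/

open Finset

def cellExp (p q : ℕ) (z : ℕ × ℕ) : ℕ := p * q - p * (z.1 + 1) - q * (z.2 + 1)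

theorem cellExp_swap (p q : ℕ) (z : ℕ × ℕ) : cellExp q p z.swap = cellExp p q z := by
  simp only [cellExp, Prod.fst_swap, Prod.snd_swap, Nat.mul_comm q p, Nat.sub_right_comm]

section Telescoping

variable {R : Type*} [CommRing R]

theorem pow_tsub_add_mul_sum_range_pow_tsub (x : R) {c d n : ℕ} (h : d * n ≤ c) :
    x ^ (c - d * n) + (x ^ d - 1) * ∑ i ∈ range n, x ^ (c - d * (i + 1)) = x ^ c := by
  induction n with
  | zero => simp
  | succ n ih =>
    have hsplit : x ^ (c - d * n) = x ^ d * x ^ (c - d * (n + 1)) := by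
      rw [← pow_add]
      congr 1
      rw [mul_add_one] at h ⊢
      omega
    rw [sum_range_succ, ← ih (le_trans (Nat.mul_le_mul_left d n.le_succ) h), hsplit]
    ring

theorem sum_pow_tsub_add_mul_sum_cellExp (x : R) (p q : ℕ) (r : ℕ → ℕ)
    (hr : ∀ j < p, p * r j + q * (j + 1) ≤ p * q) :
    ∑ a ∈ range p, x ^ (a * q - p * r (p - 1 - a)) +
        (x ^ p - 1) * ∑ j ∈ range p, ∑ i ∈ range (r j), x ^ cellExp p q (i, j) =
      ∑ a ∈ range p, (x ^ q) ^ a := by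
  rw [← sum_range_reflect, ← sum_range_reflect (fun a => (x ^ q) ^ a), mul_sum,
    ← sum_add_distrib]
  refine sum_congr rfl fun j hj => ?_
  have hj : j < p := mem_range.1 hj
  have hrow : (p - 1 - j) * q = p * q - q * (j + 1) := by
    rw [Nat.sub_sub, add_comm 1 j, Nat.sub_mul, Nat.mul_comm (j + 1)]
  have hcell : ∀ i, cellExp p q (i, j) = p * q - q * (j + 1) - p * (i + 1) := fun i =>
    Nat.sub_right_comm _ _ _
  rw [Nat.sub_sub_self (by omega : j ≤ p - 1), ← pow_mul, Nat.mul_comm q, hrow]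
  simp only [hcell]
  exact pow_tsub_add_mul_sum_range_pow_tsub x (by have := hr j hj; omega)

end Telescoping

theorem bounds_of_mul_add_mul_lt_sub_one_mul_sub_one {p q x y : ℕ}
    (h : p * x + q * y < (p - 1) * (q - 1)) :
    p * (x + 1) + q * (y + 1) ≤ p * q ∧ y < p := by
  obtain ⟨p, rfl⟩ : ∃ p', p = p' + 1 := Nat.exists_eq_succ_of_ne_zero (by rintro rfl; simp at h)
  obtain ⟨q, rfl⟩ : ∃ q', q = q' + 1 := Nat.exists_eq_succ_of_ne_zero (by rintro rfl; simp at h)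
  simp only [Nat.add_sub_cancel] at h
  constructor
  · nlinarith
  · have : q * y < q * (p + 1) := by nlinarith
    exact Nat.lt_of_mul_lt_mul_left this

namespace IsOrderIdeal

variable {T : Finset (ℕ × ℕ)}

theorem mem_iff_lt_lamb (hT : IsOrderIdeal T) {i j : ℕ} : (i, j) ∈ T ↔ i < lamb T j := by
  constructor
  · intro h
    exact Finset.le_sup (s := T.filter fun z => z.2 = j) (f := fun z => z.1 + 1)
      (mem_filter.2 ⟨h, rfl⟩)
  · intro h
    obtain ⟨z, hz, hiz⟩ := Finset.lt_sup_iff.1 h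
    rw [mem_filter] at hz
    exact hT z hz.1 (i, j) (Nat.lt_succ_iff.1 hiz) hz.2.ge

theorem sum_eq_sum_range_lamb {M : Type*} [AddCommMonoid M] (hT : IsOrderIdeal T) {p : ℕ}
    (hp : ∀ z ∈ T, z.2 < p) (f : ℕ × ℕ → M) :
    ∑ z ∈ T, f z = ∑ j ∈ range p, ∑ i ∈ range (lamb T j), f (i, j) :=
  sum_finset_product_right T (range p) (fun j => range (lamb T j)) fun z =>
    ⟨fun h => ⟨mem_range.2 (hp z h), mem_range.2 ((hT.mem_iff_lt_lamb (i := z.1)).1 h)⟩,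
      fun h => (hT.mem_iff_lt_lamb (i := z.1)).2 (mem_range.1 h.2)⟩

theorem image_swap (hT : IsOrderIdeal T) : IsOrderIdeal (T.image Prod.swap) := by
  intro a ha b hb1 hb2
  obtain ⟨a', ha', rfl⟩ := mem_image.1 ha
  exact mem_image.2 ⟨b.swap, hT a' ha' b.swap hb2 hb1, b.swap_swap⟩

end IsOrderIdeal

theorem lamb_image_swap (T : Finset (ℕ × ℕ)) : lamb (T.image Prod.swap) = mub T := by
  funext i
  rw [lamb, mub, filter_image, sup_image]
  rfl

theorem BT_eq_AT_image_swap (p q : ℕ) (T : Finset (ℕ × ℕ)) :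
    BT p q T = AT q p (T.image Prod.swap) := by
  rw [BT, AT, lamb_image_swap]

section CellExpansion

variable {p q : ℕ} {T : Finset (ℕ × ℕ)}

theorem AT_add_mul_sum_cellExp (hT : IsOrderIdeal T)
    (hreg : ∀ z ∈ T, p * z.1 + q * z.2 < (p - 1) * (q - 1)) :
    AT p q T + (X ^ p - 1) * ∑ z ∈ T, X ^ cellExp p q z = ∑ a ∈ range p, (X ^ q) ^ a := by
  rw [hT.sum_eq_sum_range_lamb fun z hz =>
    (bounds_of_mul_add_mul_lt_sub_one_mul_sub_one (hreg z hz)).2]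
  refine sum_pow_tsub_add_mul_sum_cellExp X p q (lamb T) fun j hj => ?_
  rcases Nat.eq_zero_or_pos (lamb T j) with h0 | hpos
  · rw [h0]
    nlinarith
  · have hcell := hT.mem_iff_lt_lamb.2 (Nat.sub_one_lt_of_lt hpos)
    have := (bounds_of_mul_add_mul_lt_sub_one_mul_sub_one (hreg _ hcell)).1
    rwa [Nat.sub_add_cancel hpos] at this

theorem BT_add_mul_sum_cellExp (hT : IsOrderIdeal T)
    (hreg : ∀ z ∈ T, p * z.1 + q * z.2 < (p - 1) * (q - 1)) :
    BT p q T + (X ^ q - 1) * ∑ z ∈ T, X ^ cellExp p q z = ∑ a ∈ range q, (X ^ p) ^ a := by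
  have hswap := AT_add_mul_sum_cellExp hT.image_swap (p := q) (q := p) fun z hz => by
    obtain ⟨w, hw, rfl⟩ := mem_image.1 hz
    simpa only [Prod.fst_swap, Prod.snd_swap, add_comm, mul_comm] using hreg w hw
  rw [← BT_eq_AT_image_swap, sum_image Prod.swap_injective.injOn] at hswap
  simpa only [cellExp_swap] using hswap

end CellExpansion

theorem stmt2_general (p q : ℕ) (T : Finset (ℕ × ℕ)) (hT : IsOrderIdeal T)
    (hreg : ∀ z ∈ T, p * z.1 + q * z.2 < (p - 1) * (q - 1)) :
    AT p q T * xi q = BT p q T * xi p := by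
  have hA := AT_add_mul_sum_cellExp hT hreg
  have hB := BT_add_mul_sum_cellExp hT hreg
  have hxi (d : ℕ) : xi d * (X - 1) = X ^ d - 1 := geom_sum_mul X d
  have hAgeom := geom_sum_mul (X ^ q : ℤ[X]) p
  have hBgeom := geom_sum_mul (X ^ p : ℤ[X]) q
  apply mul_right_cancel₀ (X_sub_C_ne_zero (1 : ℤ))
  rw [C_1]
  linear_combination AT p q T * hxi q - BT p q T * hxi p + (X ^ q - 1) * hA - (X ^ p - 1) * hB
    + hAgeom - hBgeom

/-- Proposition: A_T(t)·ξ_q(t) = B_T(t)·ξ_p(t). -/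
theorem stmt2 (p q : ℕ) (hp : 0 < p) (hq : 0 < q) (hpq : Nat.Coprime p q)
    (T : Finset (ℕ × ℕ)) (hT : IsOrderIdeal T)
    (hreg : ∀ z ∈ T, p * z.1 + q * z.2 < (p - 1) * (q - 1)) :
    AT p q T * xi q = BT p q T * xi p :=
  stmt2_general p q T hT hreg
end

section
/- Let p, q be relatively prime positive integers and let A(t), B(t) be polynomials with nonnegative coefficients, nonzero constant terms, satisfying A(t)·ξ_q(t) = B(t)·ξ_p(t). Write A(t) = Σ_{a=0}^{p-1} Σ_b α_{a,b} t^{aq - bp} and for each a let λ_{p-1-a} = max{b : α_{a,b} ≠ 0}. Then the sequence λ_0, λ_1, ..., λ_{p-1} is weakly decreasing (i.e., a partition) with λ_{p-1} = 0. -/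
/-!
Multiplying `A ξ_q = B ξ_p` by `t - 1` turns it into the recurrence
`α(n - q) - α(n) = β(n - p) - β(n)` for the coefficients `α` of `A` and `β` of `B`.
Suppose the exponent `N = aq - bp` is the lowest one of `A` in its class mod `p`, and that no
exponent `N + q - ip` (`i ≥ 0`) occurs in `A`. Then the recurrence makes `β` constant along
`N + q - p, N + q - 2p, …`, hence zero there, and at `n = N + q` it gives
`α(N) = -β(N + q) ≤ 0`, which is absurd. So the row `a + 1` always contains an exponent
`(a + 1)q - b'p` with `b' ≥ b`: the maxima `λ_{p-1-a}` exist and increase with `a`.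
-/

open Polynomial

def coeffZ (P : Polynomial ℤ) (j : ℤ) : ℤ := if 0 ≤ j then P.coeff j.toNat else 0

lemma coeffZ_of_neg (P : Polynomial ℤ) {j : ℤ} (hj : j < 0) : coeffZ P j = 0 :=
  if_neg (not_le.mpr hj)

lemma coeffZ_nonneg {P : Polynomial ℤ} (hP : ∀ n, 0 ≤ P.coeff n) (j : ℤ) : 0 ≤ coeffZ P j := by
  unfold coeffZ
  split_ifs
  exacts [hP _, le_rfl]

lemma coeffZ_mul_X_pow_sub_one (P : Polynomial ℤ) (d : ℕ) (n : ℤ) :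
    coeffZ (P * (X ^ d - 1)) n = coeffZ P (n - d) - coeffZ P n := by
  unfold coeffZ
  by_cases hn : 0 ≤ n
  · rw [if_pos hn, if_pos hn, mul_sub, mul_one, coeff_sub, coeff_mul_X_pow']
    by_cases hd : 0 ≤ n - d
    · rw [if_pos hd, if_pos (by omega : d ≤ n.toNat)]
      congr 2
      omega
    · rw [if_neg hd, if_neg (by omega : ¬ d ≤ n.toNat)]
  · rw [if_neg hn, if_neg hn, if_neg (by omega : ¬ (0 : ℤ) ≤ n - d), sub_zero]

lemma xi_mul_X_sub_one (d : ℕ) : xi d * (X - 1) = X ^ d - 1 :=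
  geom_sum_mul X d

lemma coeffZ_recurrence {p q : ℕ} {A B : Polynomial ℤ} (h : A * xi q = B * xi p) (n : ℤ) :
    coeffZ A (n - q) - coeffZ A n = coeffZ B (n - p) - coeffZ B n := by
  have h' : A * (X ^ q - 1) = B * (X ^ p - 1) := by
    rw [← xi_mul_X_sub_one, ← xi_mul_X_sub_one, ← mul_assoc, ← mul_assoc, h]
  rw [← coeffZ_mul_X_pow_sub_one, ← coeffZ_mul_X_pow_sub_one, h']

lemma eq_zero_of_sub_periodic {f : ℤ → ℤ} {p : ℕ} (hp : 0 < p) (hf : ∀ n < 0, f n = 0) (m : ℤ)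
    (hper : ∀ k : ℕ, f (m - (k + 1) * p) = f (m - k * p)) : f m = 0 := by
  have hconst : ∀ k : ℕ, f (m - k * p) = f m := by
    intro k
    induction k with
    | zero => simp
    | succ k ih => rw [Nat.cast_succ, hper, ih]
  have hfar : m - (m.toNat + 1 : ℕ) * p < 0 := by
    have : (m.toNat + 1 : ℤ) ≤ (m.toNat + 1 : ℕ) * p := by
      push_cast
      exact le_mul_of_one_le_right (by positivity) (by exact_mod_cast hp)
    omega
  rw [← hconst (m.toNat + 1), hf _ hfar]

section Recurrence

variable {α β : ℤ → ℤ} {p q : ℕ}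

lemma le_zero_of_recurrence (hp : 0 < p) (hrec : ∀ n, α (n - q) - α n = β (n - p) - β n)
    (hβ : ∀ n, 0 ≤ β n) (hβneg : ∀ n < 0, β n = 0) {N : ℤ}
    (hbelow : ∀ i : ℕ, α (N - (i + 1) * p) = 0) (hshift : ∀ i : ℕ, α (N + q - i * p) = 0) :
    α N ≤ 0 := by
  have hβzero : β (N + q - p) = 0 := by
    refine eq_zero_of_sub_periodic hp hβneg _ fun k => ?_
    have := hrec (N + q - (k + 1) * p)
    have hα : α (N + q - (k + 1) * p) = 0 := by exact_mod_cast hshift (k + 1)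
    rw [show N + q - (k + 1) * p - q = N - (k + 1) * p by ring, hbelow, hα] at this
    rw [show N + q - p - (k + 1) * p = N + q - (k + 1) * p - p by ring,
      show N + q - p - k * p = N + q - (k + 1) * p by ring]
    linarith
  have hα : α (N + q) = 0 := by simpa using hshift 0
  have := hrec (N + q)
  rw [add_sub_cancel_right, hβzero, hα] at this
  linarith [hβ (N + q)]

-- For `α = coeffZ A`, `b ∈ rowSupport α p q a` says that the paper's `α_{a,b}` is nonzero.
def rowSupport (α : ℤ → ℤ) (p q a : ℕ) : Set ℤ := {b | α (a * q - b * p) ≠ 0}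

lemma rowSupport_bddAbove (hp : 0 < p) (hαneg : ∀ n < 0, α n = 0) (a : ℕ) :
    BddAbove (rowSupport α p q a) := by
  refine ⟨a * q, fun b hb => ?_⟩
  have hnonneg : 0 ≤ (a : ℤ) * q - b * p := by
    by_contra hneg
    exact hb (hαneg _ (not_le.mp hneg))
  by_contra! hlt
  have hb0 : 0 ≤ b := le_trans (by positivity) hlt.le
  nlinarith [mul_le_mul_of_nonneg_left (by exact_mod_cast hp : (1 : ℤ) ≤ p) hb0]

lemma exists_mem_rowSupport_succ_ge (hp : 0 < p) (hrec : ∀ n, α (n - q) - α n = β (n - p) - β n)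
    (hα : ∀ n, 0 ≤ α n) (hβ : ∀ n, 0 ≤ β n) (hβneg : ∀ n < 0, β n = 0) {a : ℕ} {b : ℤ}
    (hb : IsGreatest (rowSupport α p q a) b) : ∃ b' ≥ b, b' ∈ rowSupport α p q (a + 1) := by
  by_contra! hnone
  refine hb.1 (le_antisymm (le_zero_of_recurrence hp hrec hβ hβneg ?_ ?_) (hα _))
  · intro i
    by_contra hi
    have : b + (i + 1) ≤ b := hb.2 (show α _ ≠ 0 by convert hi using 2; ring)
    omega
  · intro i
    by_contra hi
    exact hnone (b + i) (by omega) (show α _ ≠ 0 by convert hi using 2; push_cast; ring)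

lemma isGreatest_rowSupport_zero (hp : 0 < p) (hαneg : ∀ n < 0, α n = 0) (hα0 : α 0 ≠ 0) :
    IsGreatest (rowSupport α p q 0) 0 := by
  refine ⟨by simpa [rowSupport] using hα0, fun b hb => ?_⟩
  by_contra! hpos
  exact hb (hαneg _ (by simp only [Nat.cast_zero, zero_mul, zero_sub, neg_neg_iff_pos]; positivity))

lemma exists_monotone_isGreatest_rowSupport (hp : 0 < p)
    (hrec : ∀ n, α (n - q) - α n = β (n - p) - β n) (hα : ∀ n, 0 ≤ α n)
    (hαneg : ∀ n < 0, α n = 0) (hα0 : α 0 ≠ 0) (hβ : ∀ n, 0 ≤ β n) (hβneg : ∀ n < 0, β n = 0) :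
    ∃ M : ℕ → ℤ, Monotone M ∧ ∀ a, IsGreatest (rowSupport α p q a) (M a) := by
  have hgreatest : ∀ a, ∃ b, IsGreatest (rowSupport α p q a) b := by
    intro a
    induction a with
    | zero => exact ⟨0, isGreatest_rowSupport_zero hp hαneg hα0⟩
    | succ a ih =>
      obtain ⟨b, hb⟩ := ih
      obtain ⟨b', -, hb'⟩ := exists_mem_rowSupport_succ_ge hp hrec hα hβ hβneg hb
      exact (rowSupport_bddAbove hp hαneg _).exists_isGreatest_of_nonempty ⟨b', hb'⟩
  choose M hM using hgreatest
  refine ⟨M, monotone_nat_of_le_succ fun a => ?_, hM⟩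
  obtain ⟨b', hb', hmem⟩ := exists_mem_rowSupport_succ_ge hp hrec hα hβ hβneg (hM a)
  exact hb'.trans ((hM (a + 1)).2 hmem)

end Recurrence

theorem stmt7_general (p q : ℕ) (hp : 0 < p)
    (A B : Polynomial ℤ)
    (hA : ∀ n, 0 ≤ A.coeff n) (hB : ∀ n, 0 ≤ B.coeff n)
    (hA0 : A.coeff 0 ≠ 0)
    (h : A * xi q = B * xi p) :
    ∃ lam : ℕ → ℤ,
      (∀ a < p,
        coeffZ A ((a : ℤ) * q - lam (p - 1 - a) * p) ≠ 0 ∧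
        ∀ b : ℤ, coeffZ A ((a : ℤ) * q - b * p) ≠ 0 → b ≤ lam (p - 1 - a)) ∧
      (∀ j : ℕ, j + 1 < p → lam (j + 1) ≤ lam j) ∧
      lam (p - 1) = 0 := by
  have hA0' : coeffZ A 0 ≠ 0 := by simpa [coeffZ] using hA0
  obtain ⟨M, hmono, hM⟩ := exists_monotone_isGreatest_rowSupport hp (coeffZ_recurrence h)
    (coeffZ_nonneg hA) (fun _ => coeffZ_of_neg A) hA0' (coeffZ_nonneg hB) (fun _ => coeffZ_of_neg B)
  refine ⟨fun j => M (p - 1 - j), fun a ha => ?_, fun j hj => hmono (by omega), ?_⟩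
  · dsimp only
    rw [show p - 1 - (p - 1 - a) = a by omega]
    exact hM a
  · dsimp only
    rw [Nat.sub_self]
    exact (hM 0).unique (isGreatest_rowSupport_zero hp (fun _ => coeffZ_of_neg A) hA0')

/-- Let A, B have nonnegative coefficients, nonzero constant terms and
    A·ξ_q = B·ξ_p, gcd(p,q) = 1.  Setting λ_{p-1-a} = max{b : α_{a,b} ≠ 0}
    (where A = Σ α_{a,b} t^{aq-bp}), the λ's form a partition:
    they are weakly decreasing and λ_{p-1} = 0. -/
theorem stmt7 (p q : ℕ) (hp : 0 < p) (hq : 0 < q) (hpq : Nat.Coprime p q)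
    (A B : Polynomial ℤ)
    (hA : ∀ n, 0 ≤ A.coeff n) (hB : ∀ n, 0 ≤ B.coeff n)
    (hA0 : A.coeff 0 ≠ 0) (hB0 : B.coeff 0 ≠ 0)
    (h : A * xi q = B * xi p) :
    ∃ lam : ℕ → ℤ,
      (∀ a < p,
        coeffZ A ((a : ℤ) * q - lam (p - 1 - a) * p) ≠ 0 ∧
        ∀ b : ℤ, coeffZ A ((a : ℤ) * q - b * p) ≠ 0 → b ≤ lam (p - 1 - a)) ∧
      (∀ j : ℕ, j + 1 < p → lam (j + 1) ≤ lam j) ∧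
      lam (p - 1) = 0 :=
  stmt7_general p q hp A B hA hB hA0 h
end

section
/- Let p, q be relatively prime positive integers and let A(t), B(t) be polynomials with nonnegative rational coefficients satisfying A(t)·ξ_q(t) = B(t)·ξ_p(t). Then there exist finitely many order ideals T_k contained in R(p,q) = {(x,y) ∈ ℕ² : px + qy < (p-1)(q-1)}, nonnegative rationals γ_k, and integers c_k ≥ 0, such that A(t) = Σ_k γ_k t^{c_k} A_{T_k}(t) and B(t) = Σ_k γ_k t^{c_k} B_{T_k}(t). -/
open Polynomial

noncomputable def xiQ (d : ℕ) : Polynomial ℚ := ∑ k ∈ Finset.range d, X ^ k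

noncomputable def ATQ (p q : ℕ) (T : Finset (ℕ × ℕ)) : Polynomial ℚ :=
  ∑ a ∈ Finset.range p, X ^ (a * q - p * lamb T (p - 1 - a))

noncomputable def BTQ (p q : ℕ) (T : Finset (ℕ × ℕ)) : Polynomial ℚ :=
  ∑ a ∈ Finset.range q, X ^ (a * p - q * mub T (q - 1 - a))

/-
Let H = A/(1 - t^p) ∈ ℚ⟦t⟧. The equation gives H = B/(1 - t^q) as well, so nonnegativity of A
and B says that the coefficients of H are nonnegative and nondecreasing under n ↦ n + p and
n ↦ n + q; as A is a polynomial they take finitely many values. Cutting H into level sets writes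
it as a nonnegative combination of indicator series of sets U ⊆ ℕ closed under adding p and q.
Such a U is c + V with c = min U and V ∋ 0. As gcd(p, q) = 1, the classes of a·q (a < p) are
all residue classes mod p, and on each V is the ray starting at some m_a, so
(1 - t^p)·∑_{n ∈ V} t^n = ∑_a t^{m_a}. The cells of R(p,q) that
correspond to gaps of ⟨p, q⟩ lying in V form an order ideal T whose row p-1-a has length
(aq - m_a)/p, so this sum is A_T. Exchanging p and q gives B_T.
-/

open scoped PowerSeries

theorem existsUnique_modEq_mul {p q : ℕ} (hp : 0 < p) (hpq : p.Coprime q) (n : ℕ) :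
    ∃! a, a < p ∧ n ≡ a * q [MOD p] := by
  have hinj : Set.InjOn (fun a => a * q % p) (Finset.range p) := by
    intro a ha b hb hab
    have := Nat.ModEq.cancel_right_of_coprime hpq hab
    rwa [Nat.ModEq, Nat.mod_eq_of_lt (Finset.mem_range.1 ha),
      Nat.mod_eq_of_lt (Finset.mem_range.1 hb)] at this
  obtain ⟨a, ha, hna⟩ := Finset.surj_on_of_inj_on_of_card_le (s := Finset.range p)
    (t := Finset.range p) (fun a _ => a * q % p)
    (fun a _ => Finset.mem_range.2 (Nat.mod_lt _ hp)) (fun a b ha hb h => hinj ha hb h)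
    le_rfl (n % p) (Finset.mem_range.2 (Nat.mod_lt _ hp))
  have hna : n ≡ a * q [MOD p] := hna
  refine ⟨a, ⟨Finset.mem_range.1 ha, hna⟩, ?_⟩
  rintro b ⟨hb, hnb⟩
  exact hinj (Finset.mem_range.2 hb) ha (hnb.symm.trans hna)

theorem sum_indicator_inter_modEq_mul {R : Type*} [AddCommMonoidWithOne R] {p q : ℕ} (hp : 0 < p)
    (hpq : p.Coprime q) (V : Set ℕ) :
    ∑ a ∈ Finset.range p, (V ∩ {n | n ≡ a * q [MOD p]}).indicator (1 : ℕ → R) =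
      V.indicator 1 := by
  ext n
  obtain ⟨a, ⟨ha, hna⟩, huniq⟩ := existsUnique_modEq_mul hp hpq n
  rw [Finset.sum_apply, Finset.sum_eq_single_of_mem a (Finset.mem_range.2 ha)]
  · by_cases hn : n ∈ V
    · rw [Set.indicator_of_mem (Set.mem_inter hn hna), Set.indicator_of_mem hn]
    · rw [Set.indicator_of_notMem (fun h => hn h.1), Set.indicator_of_notMem hn]
  · intro b hb hba
    exact Set.indicator_of_notMem (fun h => hba (huniq b ⟨Finset.mem_range.1 hb, h.2⟩)) _

theorem add_mul_mem_of_add_mem {p : ℕ} {V : Set ℕ} (hV : ∀ n ∈ V, n + p ∈ V) {n : ℕ}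
    (hn : n ∈ V) (j : ℕ) : n + p * j ∈ V := by
  induction j with
  | zero => simpa
  | succ j ih => simpa [mul_add, ← add_assoc] using hV _ ih

theorem exists_forall_modEq_mem_iff {p r : ℕ} {V : Set ℕ} (hV : ∀ n ∈ V, n + p ∈ V)
    (hr : r ∈ V) : ∃ m, m ≡ r [MOD p] ∧ ∀ n, n ≡ r [MOD p] → (n ∈ V ↔ m ≤ n) := by
  classical
  have hex : ∃ n, n ∈ V ∧ n ≡ r [MOD p] := ⟨r, hr, rfl⟩
  obtain ⟨hmV, hmr⟩ := Nat.find_spec hex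
  refine ⟨Nat.find hex, hmr, fun n hnr => ⟨fun hn => Nat.find_min' hex ⟨hn, hnr⟩, fun hmn => ?_⟩⟩
  obtain ⟨j, hj⟩ := (Nat.modEq_iff_dvd' hmn).1 (hmr.trans hnr.symm)
  rw [show n = Nat.find hex + p * j by omega]
  exact add_mul_mem_of_add_mem hV hmV j

section OneSubXPow

variable {R : Type*} [Ring R] {d : ℕ}

theorem PowerSeries.coeff_one_sub_X_pow_mul (n : ℕ) (f : R⟦X⟧) :
    coeff n ((1 - X ^ d) * f) = coeff n f - if d ≤ n then coeff (n - d) f else 0 := by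
  rw [sub_mul, one_mul, map_sub, coeff_X_pow_mul']

theorem PowerSeries.X_pow_eq_one_sub_X_pow_mul (hd : 0 < d) (e : ℕ) :
    (X ^ e : R⟦X⟧) = (1 - X ^ d) * mk ({n | e ≤ n ∧ n ≡ e [MOD d]}.indicator 1) := by
  set P : Set ℕ := {n | e ≤ n ∧ n ≡ e [MOD d]}
  have hP : ∀ {n}, n ∈ P ↔ e ≤ n ∧ d ∣ n - e := fun {n} =>
    and_congr_right fun h => Nat.ModEq.comm.trans (Nat.modEq_iff_dvd' h)
  ext n
  rw [coeff_one_sub_X_pow_mul, coeff_X_pow, coeff_mk, coeff_mk]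
  have hstep : d ≤ n ∧ n - d ∈ P ↔ n ∈ P ∧ n ≠ e := by
    rw [hP, hP]
    constructor
    · rintro ⟨hdn, hen, hdvd⟩
      refine ⟨⟨by omega, ?_⟩, by omega⟩
      rwa [show n - e = n - d - e + d by omega, Nat.dvd_add_self_right]
    · rintro ⟨⟨hen, hdvd⟩, hne⟩
      have := Nat.le_of_dvd (by omega) hdvd
      refine ⟨by omega, by omega, ?_⟩
      rwa [show n - e = n - d - e + d by omega, Nat.dvd_add_self_right] at hdvd
  have he : e ∈ P := hP.2 ⟨le_rfl, by simp⟩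
  simp only [Set.indicator_apply, Pi.one_apply]
  split_ifs <;> (simp_all; try omega)

theorem PowerSeries.X_pow_mul_mk_indicator_preimage {U : Set ℕ} {c : ℕ} (hc : ∀ n ∈ U, c ≤ n) :
    (X ^ c : R⟦X⟧) * mk (((c + ·) ⁻¹' U).indicator 1) = mk (U.indicator 1) := by
  classical
  ext n
  rw [coeff_X_pow_mul', coeff_mk, coeff_mk]
  split_ifs with h
  · simp only [Set.indicator_apply, Set.mem_preimage, Nat.add_sub_cancel' h, Pi.one_apply]
  · exact (Set.indicator_of_notMem (fun hn => h (hc n hn)) _).symm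

variable {H : R⟦X⟧}

theorem PowerSeries.coeff_nonneg_of_coeff_one_sub_X_pow_mul_nonneg [PartialOrder R]
    [IsOrderedAddMonoid R] (hd : 0 < d) (h : ∀ n, 0 ≤ coeff n ((1 - X ^ d) * H)) (n : ℕ) :
    0 ≤ coeff n H := by
  induction n using Nat.strong_induction_on with
  | _ n ih =>
    have hn := h n
    rw [coeff_one_sub_X_pow_mul, sub_nonneg] at hn
    split_ifs at hn with hdn
    · exact (ih _ (by omega)).trans hn
    · exact hn

theorem PowerSeries.coeff_le_coeff_add_of_coeff_one_sub_X_pow_mul_nonneg [PartialOrder R]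
    [IsOrderedAddMonoid R] (h : ∀ n, 0 ≤ coeff n ((1 - X ^ d) * H)) (n : ℕ) :
    coeff n H ≤ coeff (n + d) H := by
  have := h (n + d)
  rwa [coeff_one_sub_X_pow_mul, if_pos (Nat.le_add_left d n), Nat.add_sub_cancel,
    sub_nonneg] at this

theorem PowerSeries.finite_range_coeff_of_coe_eq_one_sub_X_pow_mul (hd : 0 < d) {A : R[X]}
    (h : (A : R⟦X⟧) = (1 - X ^ d) * H) : (Set.range fun n => coeff n H).Finite := by
  refine ((Set.finite_Iio (A.natDegree + d + 1)).image fun n => coeff n H).subset ?_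
  rintro _ ⟨n, rfl⟩
  induction n using Nat.strong_induction_on with
  | _ n ih =>
    by_cases hn : n < A.natDegree + d + 1
    · exact ⟨n, hn, rfl⟩
    · have hA := congrArg (coeff n) h
      rw [Polynomial.coeff_coe, Polynomial.coeff_eq_zero_of_natDegree_lt (by omega),
        coeff_one_sub_X_pow_mul, if_pos (by omega), eq_comm, sub_eq_zero] at hA
      simpa only [hA] using ih (n - d) (by omega)

end OneSubXPow

theorem lamb_eq_of_forall_mem_iff {T : Finset (ℕ × ℕ)} {y l : ℕ}
    (h : ∀ x, (x, y) ∈ T ↔ x < l) : lamb T y = l := by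
  refine le_antisymm (Finset.sup_le fun z hz => ?_) ?_
  · obtain ⟨hzT, rfl⟩ := Finset.mem_filter.1 hz
    exact (h z.1).1 hzT
  · rcases Nat.eq_zero_or_pos l with rfl | hl
    · exact Nat.zero_le _
    · have hmem : (l - 1, y) ∈ T.filter fun z => z.2 = y :=
        Finset.mem_filter.2 ⟨(h _).2 (by omega), rfl⟩
      calc l = l - 1 + 1 := by omega
        _ ≤ lamb T y := Finset.le_sup (f := fun z : ℕ × ℕ => z.1 + 1) hmem

theorem mub_eq_lamb_image_swap (T : Finset (ℕ × ℕ)) (i : ℕ) :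
    mub T i = lamb (T.image Prod.swap) i := by
  rw [lamb, mub, Finset.filter_image, Finset.sup_image]
  rfl

theorem BTQ_eq_ATQ_image_swap (p q : ℕ) (T : Finset (ℕ × ℕ)) :
    BTQ p q T = ATQ q p (T.image Prod.swap) := by
  simp only [BTQ, ATQ, mub_eq_lamb_image_swap]

/- (x, y) ↦ (p-1)(q-1) - 1 - (px + qy) maps R(p,q) onto the gaps of the semigroup ⟨p, q⟩. -/
open Classical in
noncomputable def semimoduleIdeal (p q : ℕ) (V : Set ℕ) : Finset (ℕ × ℕ) :=
  let N := (p - 1) * (q - 1)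
  (Finset.range N ×ˢ Finset.range N).filter fun z =>
    p * z.1 + q * z.2 < N ∧ N - 1 - (p * z.1 + q * z.2) ∈ V

section Semimodule

variable {p q : ℕ} {V : Set ℕ}

theorem mem_semimoduleIdeal (hp : 0 < p) (hq : 0 < q) {z : ℕ × ℕ} :
    z ∈ semimoduleIdeal p q V ↔
      p * z.1 + q * z.2 < (p - 1) * (q - 1) ∧ (p - 1) * (q - 1) - 1 - (p * z.1 + q * z.2) ∈ V := by
  simp only [semimoduleIdeal, Finset.mem_filter, Finset.mem_product, Finset.mem_range,
    and_iff_right_iff_imp]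
  rintro ⟨h, -⟩
  constructor <;> nlinarith

theorem mk_mem_semimoduleIdeal_iff (hq : 0 < q) {a : ℕ} (ha : a < p) (x : ℕ) :
    (x, p - 1 - a) ∈ semimoduleIdeal p q V ↔ p * (x + 1) ≤ a * q ∧ a * q - p * (x + 1) ∈ V := by
  have hN : (p - 1) * (q - 1) + p = q * (p - 1 - a) + a * q + 1 := by
    obtain ⟨b, rfl⟩ : ∃ b, p = a + b + 1 := ⟨p - a - 1, by omega⟩
    obtain ⟨r, rfl⟩ : ∃ r, q = r + 1 := ⟨q - 1, by omega⟩
    simp only [Nat.add_sub_cancel, Nat.add_sub_cancel_left]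
    ring
  have hx : p * (x + 1) = p * x + p := by ring
  rw [mem_semimoduleIdeal (by omega) hq]
  dsimp only
  constructor
  · rintro ⟨hlt, hV⟩
    refine ⟨by omega, ?_⟩
    rwa [show a * q - p * (x + 1) = (p - 1) * (q - 1) - 1 - (p * x + q * (p - 1 - a)) by omega]
  · rintro ⟨hle, hV⟩
    refine ⟨by omega, ?_⟩
    rwa [show (p - 1) * (q - 1) - 1 - (p * x + q * (p - 1 - a)) = a * q - p * (x + 1) by omega]

theorem isOrderIdeal_semimoduleIdeal (hp : 0 < p) (hq : 0 < q) (hVp : ∀ n ∈ V, n + p ∈ V)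
    (hVq : ∀ n ∈ V, n + q ∈ V) : IsOrderIdeal (semimoduleIdeal p q V) := by
  intro z hz w hw1 hw2
  rw [mem_semimoduleIdeal hp hq] at hz ⊢
  obtain ⟨i, hi⟩ := Nat.exists_eq_add_of_le hw1
  obtain ⟨j, hj⟩ := Nat.exists_eq_add_of_le hw2
  have hz' : p * z.1 + q * z.2 = p * w.1 + q * w.2 + p * i + q * j := by rw [hi, hj]; ring
  refine ⟨by omega, ?_⟩
  have := add_mul_mem_of_add_mem hVq (add_mul_mem_of_add_mem hVp hz.2 i) j
  rwa [show (p - 1) * (q - 1) - 1 - (p * z.1 + q * z.2) + p * i + q * j =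
    (p - 1) * (q - 1) - 1 - (p * w.1 + q * w.2) by omega] at this

theorem image_swap_semimoduleIdeal (hp : 0 < p) (hq : 0 < q) :
    (semimoduleIdeal p q V).image Prod.swap = semimoduleIdeal q p V := by
  ext ⟨x, y⟩
  simp only [Finset.mem_image, Prod.exists, Prod.swap_prod_mk, Prod.mk.injEq,
    mem_semimoduleIdeal hp hq, mem_semimoduleIdeal hq hp]
  rw [mul_comm (q - 1), add_comm (q * x)]
  exact ⟨fun ⟨_, _, h, hb, ha⟩ => ha ▸ hb ▸ h, fun h => ⟨y, x, h, rfl, rfl⟩⟩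

theorem setOf_exponent_le_and_modEq_eq_inter (hq : 0 < q) (h0 : 0 ∈ V)
    (hVp : ∀ n ∈ V, n + p ∈ V) (hVq : ∀ n ∈ V, n + q ∈ V) {a : ℕ} (ha : a < p) :
    {n | a * q - p * lamb (semimoduleIdeal p q V) (p - 1 - a) ≤ n ∧
        n ≡ a * q - p * lamb (semimoduleIdeal p q V) (p - 1 - a) [MOD p]} =
      V ∩ {n | n ≡ a * q [MOD p]} := by
  have haq : a * q ∈ V := by simpa [mul_comm] using add_mul_mem_of_add_mem hVq h0 a
  obtain ⟨m, hmr, hiff⟩ := exists_forall_modEq_mem_iff hVp haq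
  have hm : m ≤ a * q := (hiff _ rfl).1 haq
  obtain ⟨l, hl⟩ := (Nat.modEq_iff_dvd' hm).1 hmr
  have hrow : ∀ x, (x, p - 1 - a) ∈ semimoduleIdeal p q V ↔ x < l := by
    intro x
    have hmod : p * (x + 1) ≤ a * q → a * q - p * (x + 1) ≡ a * q [MOD p] := fun h =>
      (Nat.modEq_iff_dvd' (Nat.sub_le _ _)).2 ⟨x + 1, by omega⟩
    have hxl : x < l ↔ p * (x + 1) ≤ p * l := (Nat.mul_le_mul_left_iff (by omega)).symm
    rw [mk_mem_semimoduleIdeal_iff hq ha, hxl, ← hl]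
    constructor
    · rintro ⟨hle, hV⟩
      have := (hiff _ (hmod hle)).1 hV
      omega
    · intro hx
      have hle : p * (x + 1) ≤ a * q := by omega
      exact ⟨hle, (hiff _ (hmod hle)).2 (by omega)⟩
  have he : a * q - p * lamb (semimoduleIdeal p q V) (p - 1 - a) = m := by
    rw [lamb_eq_of_forall_mem_iff hrow]
    omega
  ext n
  simp only [he, Set.mem_ofPred_eq, Set.mem_inter_iff]
  constructor
  · rintro ⟨hmn, hnm⟩
    have hnr := hnm.trans hmr
    exact ⟨(hiff n hnr).2 hmn, hnr⟩
  · rintro ⟨hn, hnr⟩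
    exact ⟨(hiff n hnr).1 hn, hnr.trans hmr.symm⟩

theorem coe_ATQ_semimoduleIdeal (hp : 0 < p) (hq : 0 < q) (hpq : p.Coprime q) (h0 : 0 ∈ V)
    (hVp : ∀ n ∈ V, n + p ∈ V) (hVq : ∀ n ∈ V, n + q ∈ V) :
    (ATQ p q (semimoduleIdeal p q V) : ℚ⟦X⟧) =
      (1 - PowerSeries.X ^ p) * PowerSeries.mk (V.indicator 1) := by
  have hmk : ∀ f : ℕ → ℕ → ℚ, PowerSeries.mk (∑ a ∈ Finset.range p, f a) =
      ∑ a ∈ Finset.range p, PowerSeries.mk (f a) := fun f => by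
    ext n
    simp [Finset.sum_apply]
  rw [← sum_indicator_inter_modEq_mul hp hpq V, ATQ, ← Polynomial.coeToPowerSeries.ringHom_apply,
    map_sum, hmk, Finset.mul_sum]
  refine Finset.sum_congr rfl fun a ha => ?_
  rw [map_pow, Polynomial.coeToPowerSeries.ringHom_apply, Polynomial.coe_X,
    ← setOf_exponent_le_and_modEq_eq_inter hq h0 hVp hVq (Finset.mem_range.1 ha),
    ← PowerSeries.X_pow_eq_one_sub_X_pow_mul hp]

theorem coe_BTQ_semimoduleIdeal (hp : 0 < p) (hq : 0 < q) (hpq : p.Coprime q) (h0 : 0 ∈ V)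
    (hVp : ∀ n ∈ V, n + p ∈ V) (hVq : ∀ n ∈ V, n + q ∈ V) :
    (BTQ p q (semimoduleIdeal p q V) : ℚ⟦X⟧) =
      (1 - PowerSeries.X ^ q) * PowerSeries.mk (V.indicator 1) := by
  rw [BTQ_eq_ATQ_image_swap, image_swap_semimoduleIdeal hp hq]
  exact coe_ATQ_semimoduleIdeal hq hp hpq.symm h0 hVq hVp

end Semimodule

theorem exists_isOrderIdeal_coe_X_pow_mul_ATQ_BTQ {p q : ℕ} (hp : 0 < p) (hq : 0 < q)
    (hpq : p.Coprime q) {U : Set ℕ} (hU : U.Nonempty) (hUp : ∀ n ∈ U, n + p ∈ U)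
    (hUq : ∀ n ∈ U, n + q ∈ U) :
    ∃ (T : Finset (ℕ × ℕ)) (c : ℕ), IsOrderIdeal T ∧
      (∀ z ∈ T, p * z.1 + q * z.2 < (p - 1) * (q - 1)) ∧
      ((X ^ c * ATQ p q T : ℚ[X]) : ℚ⟦X⟧) =
        (1 - PowerSeries.X ^ p) * PowerSeries.mk (U.indicator 1) ∧
      ((X ^ c * BTQ p q T : ℚ[X]) : ℚ⟦X⟧) =
        (1 - PowerSeries.X ^ q) * PowerSeries.mk (U.indicator 1) := by
  classical
  set c := Nat.find hU
  have hc : ∀ n ∈ U, c ≤ n := fun n hn => Nat.find_min' hU hn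
  set V := (c + ·) ⁻¹' U
  have h0 : 0 ∈ V := Nat.find_spec hU
  have hVp : ∀ n ∈ V, n + p ∈ V := fun n hn => by simpa [V, add_assoc] using hUp _ hn
  have hVq : ∀ n ∈ V, n + q ∈ V := fun n hn => by simpa [V, add_assoc] using hUq _ hn
  refine ⟨semimoduleIdeal p q V, c, isOrderIdeal_semimoduleIdeal hp hq hVp hVq,
    fun z hz => ((mem_semimoduleIdeal hp hq).1 hz).1, ?_, ?_⟩
  · rw [Polynomial.coe_mul, Polynomial.coe_pow, Polynomial.coe_X,
      coe_ATQ_semimoduleIdeal hp hq hpq h0 hVp hVq, mul_left_comm,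
      PowerSeries.X_pow_mul_mk_indicator_preimage hc]
  · rw [Polynomial.coe_mul, Polynomial.coe_pow, Polynomial.coe_X,
      coe_BTQ_semimoduleIdeal hp hq hpq h0 hVp hVq, mul_left_comm,
      PowerSeries.X_pow_mul_mk_indicator_preimage hc]

theorem card_filter_pos_image_lt {R : Type*} [AddGroup R] [LinearOrder R] {s : Finset R} {m : R}
    (hm : m ∈ s) (hm0 : 0 < m) :
    ((s.image fun v => if 0 < v then v - m else 0).filter (0 < ·)).card <
      (s.filter (0 < ·)).card := by
  set g : R → R := fun v => if 0 < v then v - m else 0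
  have hsub : (s.image g).filter (0 < ·) ⊆ ((s.filter (0 < ·)).erase m).image g := by
    intro v hv
    obtain ⟨⟨w, hw, rfl⟩, hgw⟩ := And.imp_left Finset.mem_image.1 (Finset.mem_filter.1 hv)
    have hw0 : 0 < w := by
      by_contra h
      simp [g, h] at hgw
    refine Finset.mem_image.2 ⟨w, Finset.mem_erase.2 ⟨?_, Finset.mem_filter.2 ⟨hw, hw0⟩⟩, rfl⟩
    rintro rfl
    simp [g, hw0] at hgw
  calc _ ≤ _ := Finset.card_le_card hsub
    _ ≤ _ := Finset.card_image_le
    _ < _ := Finset.card_erase_lt_of_mem (Finset.mem_filter.2 ⟨hm, hm0⟩)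

theorem exists_sum_indicator_of_monotone {R α : Type*} [Ring R] [LinearOrder R]
    [IsStrictOrderedRing R] (r : α → α → Prop) (H : α → R)
    (h0 : ∀ a, 0 ≤ H a) (hr : ∀ a b, r a b → H a ≤ H b) (hfin : (Set.range H).Finite) :
    ∃ (k : ℕ) (γ : Fin k → R) (U : Fin k → Set α), (∀ i, 0 ≤ γ i) ∧ (∀ i, (U i).Nonempty) ∧
      (∀ i a b, r a b → a ∈ U i → b ∈ U i) ∧ ∀ a, H a = ∑ i, γ i * (U i).indicator 1 a := by
  classical
  obtain ⟨s, hs⟩ : ∃ s : Finset R, ∀ a, H a ∈ s := ⟨hfin.toFinset, by simp⟩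
  clear hfin
  induction hn : (s.filter (0 < ·)).card using Nat.strong_induction_on generalizing H s with
  | _ n ih =>
  by_cases hzero : ∀ a, H a = 0
  · exact ⟨0, Fin.elim0, Fin.elim0, fun i => i.elim0, fun i => i.elim0, fun i => i.elim0,
      fun a => by simp [hzero]⟩
  obtain ⟨a₀, ha₀⟩ := not_forall.1 hzero
  have hpos : 0 < H a₀ := (h0 a₀).lt_of_ne' ha₀
  have hne : (s.filter (0 < ·)).Nonempty := ⟨H a₀, Finset.mem_filter.2 ⟨hs a₀, hpos⟩⟩
  set m := (s.filter (0 < ·)).min' hne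
  have hm : 0 < m := (Finset.mem_filter.1 ((s.filter (0 < ·)).min'_mem hne)).2
  have hmle : ∀ a, 0 < H a → m ≤ H a := fun a ha =>
    Finset.min'_le _ _ (Finset.mem_filter.2 ⟨hs a, ha⟩)
  set g : R → R := fun v => if 0 < v then v - m else 0
  have hg0 : ∀ a, 0 ≤ g (H a) := fun a => by
    by_cases ha : 0 < H a
    · simpa [g, ha] using hmle a ha
    · simp [g, ha]
  have hgr : ∀ a b, r a b → g (H a) ≤ g (H b) := fun a b hab => by
    by_cases ha : 0 < H a
    · have hb : 0 < H b := ha.trans_le (hr a b hab)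
      simpa [g, ha, hb] using hr a b hab
    · simpa [g, ha] using hg0 b
  obtain ⟨k, γ, U, hγ, hU, hUr, hsum⟩ := ih _
    (hn ▸ card_filter_pos_image_lt (Finset.mem_filter.1 (Finset.min'_mem _ hne)).1 hm)
    (g ∘ H) hg0 hgr (s.image g) (fun a => Finset.mem_image_of_mem g (hs a)) rfl
  refine ⟨k + 1, Fin.cons m γ, Fin.cons {a | 0 < H a} U, Fin.cases hm.le hγ,
    Fin.cases ⟨a₀, hpos⟩ hU, Fin.cases (fun a b hab ha => ha.trans_le (hr a b hab)) hUr,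
    fun a => ?_⟩
  simp only [Fin.sum_univ_succ, Fin.cons_zero, Fin.cons_succ, ← hsum, Function.comp_apply]
  by_cases ha : 0 < H a
  · simp [g, ha]
  · simp [g, le_antisymm (not_lt.1 ha) (h0 a)]

theorem exists_coe_eq_one_sub_X_pow_mul_of_mul_xiQ_eq {p q : ℕ} (hp : 0 < p) {A B : ℚ[X]}
    (h : A * xiQ q = B * xiQ p) :
    ∃ H : ℚ⟦X⟧, (A : ℚ⟦X⟧) = (1 - PowerSeries.X ^ p) * H ∧
      (B : ℚ⟦X⟧) = (1 - PowerSeries.X ^ q) * H := by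
  have hinv : (1 - PowerSeries.X ^ p : ℚ⟦X⟧) * (1 - PowerSeries.X ^ p)⁻¹ = 1 :=
    PowerSeries.mul_inv_cancel _ (by simp [hp.ne'])
  have hAB : A * (1 - X ^ q) = B * (1 - X ^ p) := by
    simp only [xiQ] at h
    rw [← geom_sum_mul_neg, ← geom_sum_mul_neg, ← mul_assoc, ← mul_assoc, h]
  have hAB' := congrArg (fun P : ℚ[X] => (P : ℚ⟦X⟧)) hAB
  simp only [Polynomial.coe_mul, Polynomial.coe_sub, Polynomial.coe_one, Polynomial.coe_pow,
    Polynomial.coe_X] at hAB'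
  refine ⟨A * (1 - PowerSeries.X ^ p)⁻¹, by rw [mul_left_comm, hinv, mul_one], ?_⟩
  calc (B : ℚ⟦X⟧) = (B : ℚ⟦X⟧) * (1 - PowerSeries.X ^ p) * (1 - PowerSeries.X ^ p)⁻¹ := by
        rw [mul_assoc, hinv, mul_one]
    _ = _ := by rw [← hAB']; ring

theorem exists_eq_sum_C_mul_mk_indicator {p q : ℕ} (hp : 0 < p) {A B : ℚ[X]} {H : ℚ⟦X⟧}
    (hAH : (A : ℚ⟦X⟧) = (1 - PowerSeries.X ^ p) * H)
    (hBH : (B : ℚ⟦X⟧) = (1 - PowerSeries.X ^ q) * H)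
    (hA : ∀ n, 0 ≤ A.coeff n) (hB : ∀ n, 0 ≤ B.coeff n) :
    ∃ (k : ℕ) (γ : Fin k → ℚ) (U : Fin k → Set ℕ), (∀ i, 0 ≤ γ i) ∧ (∀ i, (U i).Nonempty) ∧
      (∀ i, ∀ n ∈ U i, n + p ∈ U i) ∧ (∀ i, ∀ n ∈ U i, n + q ∈ U i) ∧
      H = ∑ i, PowerSeries.C (γ i) * PowerSeries.mk ((U i).indicator 1) := by
  have hA' : ∀ n, 0 ≤ PowerSeries.coeff n ((1 - PowerSeries.X ^ p) * H) := by
    simpa [← hAH] using hA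
  have hB' : ∀ n, 0 ≤ PowerSeries.coeff n ((1 - PowerSeries.X ^ q) * H) := by
    simpa [← hBH] using hB
  obtain ⟨k, γ, U, hγ, hU, hUr, hHU⟩ := exists_sum_indicator_of_monotone
    (fun m n => n = m + p ∨ n = m + q) (fun n => PowerSeries.coeff n H)
    (PowerSeries.coeff_nonneg_of_coeff_one_sub_X_pow_mul_nonneg hp hA')
    (by
      rintro n _ (rfl | rfl)
      exacts [PowerSeries.coeff_le_coeff_add_of_coeff_one_sub_X_pow_mul_nonneg hA' n,
        PowerSeries.coeff_le_coeff_add_of_coeff_one_sub_X_pow_mul_nonneg hB' n])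
    (PowerSeries.finite_range_coeff_of_coe_eq_one_sub_X_pow_mul hp hAH)
  refine ⟨k, γ, U, hγ, hU, fun i n => hUr i n _ (Or.inl rfl), fun i n => hUr i n _ (Or.inr rfl),
    ?_⟩
  ext n
  simp [map_sum, hHU n]

theorem Polynomial.eq_sum_C_mul_of_coe_eq_mul {R ι : Type*} [CommRing R] (s : Finset ι)
    {A : R[X]} {F H : R⟦X⟧} {γ : ι → R} {G : ι → R⟦X⟧} {P : ι → R[X]}
    (hA : (A : R⟦X⟧) = F * H) (hH : H = ∑ i ∈ s, PowerSeries.C (γ i) * G i)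
    (hP : ∀ i, (P i : R⟦X⟧) = F * G i) : A = ∑ i ∈ s, C (γ i) * P i := by
  apply coe_injective
  rw [hA, hH, Finset.mul_sum, ← coeToPowerSeries.ringHom_apply, map_sum]
  refine Finset.sum_congr rfl fun i _ => ?_
  rw [map_mul, coeToPowerSeries.ringHom_apply, coeToPowerSeries.ringHom_apply, hP, coe_C,
    mul_left_comm]

/-- Every pair of nonnegative solutions of A·ξ_q = B·ξ_p is a nonnegative
    combination of shifted pairs (A_T, B_T) for order ideals T in R(p,q). -/
theorem stmt9 (p q : ℕ) (hp : 0 < p) (hq : 0 < q) (hpq : Nat.Coprime p q)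
    (A B : Polynomial ℚ)
    (hA : ∀ n, 0 ≤ A.coeff n) (hB : ∀ n, 0 ≤ B.coeff n)
    (h : A * xiQ q = B * xiQ p) :
    ∃ (k : ℕ) (T : Fin k → Finset (ℕ × ℕ)) (γ : Fin k → ℚ) (c : Fin k → ℕ),
      (∀ i, IsOrderIdeal (T i)) ∧
      (∀ i, ∀ z ∈ T i, p * z.1 + q * z.2 < (p - 1) * (q - 1)) ∧
      (∀ i, 0 ≤ γ i) ∧
      A = ∑ i, C (γ i) * X ^ (c i) * ATQ p q (T i) ∧
      B = ∑ i, C (γ i) * X ^ (c i) * BTQ p q (T i) := by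
  obtain ⟨H, hAH, hBH⟩ := exists_coe_eq_one_sub_X_pow_mul_of_mul_xiQ_eq hp h
  obtain ⟨k, γ, U, hγ, hU, hUp, hUq, hH⟩ := exists_eq_sum_C_mul_mk_indicator hp hAH hBH hA hB
  choose T c hT hR hAT hBT using fun i =>
    exists_isOrderIdeal_coe_X_pow_mul_ATQ_BTQ hp hq hpq (hU i) (hUp i) (hUq i)
  refine ⟨k, T, γ, c, hT, hR, hγ, ?_, ?_⟩ <;> simp only [mul_assoc]
  · exact Polynomial.eq_sum_C_mul_of_coe_eq_mul _ hAH hH hAT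
  · exact Polynomial.eq_sum_C_mul_of_coe_eq_mul _ hBH hH hBT
end

section
/- Let p, q be relatively prime positive integers, with p, q ≥ 1. The maximal order ideal T̂ = {(x,y) ∈ ℕ² : px + qy < (p-1)(q-1)} satisfies A_{T̂}(t) = ξ_p(t) and B_{T̂}(t) = ξ_q(t); i.e., the partition λ of T̂ satisfies that the multiset {aq - pλ_{p-1-a} : 0 ≤ a < p} equals {0, 1, ..., p-1}. -/
open Polynomial

lemma key (p q a x : ℕ) (hq : 1 ≤ q) (ha : a < p) :
    p * x + q * (p - 1 - a) < (p - 1) * (q - 1) ↔ p * (x + 1) ≤ a * q := by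
  obtain ⟨b, rfl⟩ : ∃ b, p = a + 1 + b := ⟨p - a - 1, by omega⟩
  obtain ⟨c, rfl⟩ : ∃ c, q = c + 1 := ⟨q - 1, by omega⟩
  have h1 : a + 1 + b - 1 - a = b := by omega
  have h2 : a + 1 + b - 1 = a + b := by omega
  have h3 : c + 1 - 1 = c := by omega
  rw [h1, h2, h3]
  constructor <;> intro h <;> nlinarith

lemma lamb_That (p q : ℕ) (hp : 1 ≤ p) (hq : 1 ≤ q)
    (That : Finset (ℕ × ℕ))
    (hThat : ∀ z : ℕ × ℕ, z ∈ That ↔ p * z.1 + q * z.2 < (p - 1) * (q - 1))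
    (a : ℕ) (ha : a < p) :
    lamb That (p - 1 - a) = a * q / p := by
  unfold lamb
  apply le_antisymm
  · apply Finset.sup_le
    intro z hz
    rw [Finset.mem_filter] at hz
    have h1 := (hThat z).1 hz.1
    rw [hz.2] at h1
    have h2 := (key p q a z.1 hq ha).1 h1
    rw [Nat.le_div_iff_mul_le (by omega : 0 < p)]
    linarith
  · rcases Nat.eq_zero_or_pos (a * q / p) with h0 | h0
    · omega
    · have hmem : ((a * q / p - 1, p - 1 - a) : ℕ × ℕ) ∈
          That.filter (fun z => z.2 = p - 1 - a) := by
        rw [Finset.mem_filter]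
        refine ⟨(hThat _).2 ?_, rfl⟩
        apply (key p q a (a * q / p - 1) hq ha).2
        have h1 : (a * q / p) * p ≤ a * q := Nat.div_mul_le_self _ _
        have hL : a * q / p - 1 + 1 = a * q / p := by omega
        rw [hL]; linarith
      have := Finset.le_sup (f := fun z : ℕ × ℕ => z.1 + 1) hmem
      simp only at this
      omega

lemma mub_That (p q : ℕ) (hp : 1 ≤ p) (hq : 1 ≤ q)
    (That : Finset (ℕ × ℕ))
    (hThat : ∀ z : ℕ × ℕ, z ∈ That ↔ p * z.1 + q * z.2 < (p - 1) * (q - 1))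
    (a : ℕ) (ha : a < q) :
    mub That (q - 1 - a) = a * p / q := by
  unfold mub
  apply le_antisymm
  · apply Finset.sup_le
    intro z hz
    rw [Finset.mem_filter] at hz
    have h1 := (hThat z).1 hz.1
    rw [hz.2] at h1
    have h2 := (key q p a z.2 hp ha).1 (by linarith [h1] )
    rw [Nat.le_div_iff_mul_le (by omega : 0 < q)]
    linarith
  · rcases Nat.eq_zero_or_pos (a * p / q) with h0 | h0
    · omega
    · have hmem : ((q - 1 - a, a * p / q - 1) : ℕ × ℕ) ∈
          That.filter (fun z => z.1 = q - 1 - a) := by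
        rw [Finset.mem_filter]
        refine ⟨(hThat _).2 ?_, rfl⟩
        have h2 : q * (a * p / q - 1 + 1) ≤ a * p := by
          have h1 : (a * p / q) * q ≤ a * p := Nat.div_mul_le_self _ _
          have hL : a * p / q - 1 + 1 = a * p / q := by omega
          rw [hL]; linarith
        have := (key q p a (a * p / q - 1) hp ha).2 h2
        linarith
      have := Finset.le_sup (f := fun z : ℕ × ℕ => z.2 + 1) hmem
      simp only at this
      omega

lemma sum_mod (p q : ℕ) (hp : 1 ≤ p) (hpq : Nat.Coprime q p) :
    ∑ a ∈ Finset.range p, (X : Polynomial ℤ) ^ (a * q % p) = xi p := by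
  have hinj : ∀ a ∈ Finset.range p, ∀ b ∈ Finset.range p,
      a * q % p = b * q % p → a = b := by
    intro a ha b hb h
    rw [Finset.mem_range] at ha hb
    have hmod : a ≡ b [MOD p] :=
      (Nat.ModEq.cancel_right_of_coprime hpq.symm (h : a * q ≡ b * q [MOD p]))
    have : a % p = b % p := hmod
    rwa [Nat.mod_eq_of_lt ha, Nat.mod_eq_of_lt hb] at this
  have himg : (Finset.range p).image (fun a => a * q % p) = Finset.range p := by
    apply Finset.eq_of_subset_of_card_le
    · intro x hx
      simp only [Finset.mem_image, Finset.mem_range] at hx ⊢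
      obtain ⟨a, _, rfl⟩ := hx
      exact Nat.mod_lt _ (by omega)
    · rw [Finset.card_image_of_injOn fun a ha b hb h => hinj a ha b hb h]
  rw [xi]
  conv_rhs => rw [← himg]
  exact (Finset.sum_image hinj).symm

/-- The maximal order ideal T̂ = {(x,y) ∈ ℕ² : px + qy < (p-1)(q-1)}
    (a finite set: necessarily x < q and y < p) satisfies
    A_{T̂}(t) = ξ_p(t) and B_{T̂}(t) = ξ_q(t); in particular the multiset of
    exponents {aq - pλ_{p-1-a} : 0 ≤ a < p} is {0,1,...,p-1}. -/
theorem stmt12 (p q : ℕ) (hp : 1 ≤ p) (hq : 1 ≤ q) (hpq : Nat.Coprime p q)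
    (That : Finset (ℕ × ℕ))
    (hThat : ∀ z : ℕ × ℕ, z ∈ That ↔ p * z.1 + q * z.2 < (p - 1) * (q - 1)) :
    AT p q That = xi p ∧ BT p q That = xi q := by
  constructor
  · rw [AT, ← sum_mod p q hp hpq.symm]
    apply Finset.sum_congr rfl
    intro a ha
    rw [Finset.mem_range] at ha
    rw [lamb_That p q hp hq That hThat a ha]
    congr 1
    have := Nat.div_add_mod (a * q) p
    omega
  · rw [BT, ← sum_mod q p hq hpq]
    apply Finset.sum_congr rfl
    intro a ha
    rw [Finset.mem_range] at ha
    rw [mub_That p q hp hq That hThat a ha]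
    congr 1
    have := Nat.div_add_mod (a * p) q
    omega
end
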